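/- Let G be an undirected graph with strictly positive edge weights, s a vertex, and κ a vertex coloring. If p is a walk starting at s visiting every color that has minimum total weight among all such walks, then p never traverses the same edge twice in the same direction; that is, for every ordered pair (i,j) with {i,j} an edge of G, the directed traversal from i to j occurs at most once along p. -/
import Mathlib


open SimpleGraph

/-- The total weight of a walk: sum of edge weights with multiplicity. -/
def walkWeight {V : Type*} {G : SimpleGraph V} (w : V → V → ℝ) {u v : V}
    (p : G.Walk u v) : ℝ :=
  (p.darts.map (fun d => w d.fst d.snd)).sum

lemma walkWeight_append {V : Type*} {G : SimpleGraph V} (w : V → V → ℝ) {u v x : V}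
    (p : G.Walk u v) (q : G.Walk v x) :
    walkWeight w (p.append q) = walkWeight w p + walkWeight w q := by
  simp [walkWeight, SimpleGraph.Walk.darts_append]

lemma walkWeight_cons {V : Type*} {G : SimpleGraph V} (w : V → V → ℝ) {u v x : V}
    (h : G.Adj u v) (p : G.Walk v x) :
    walkWeight w (SimpleGraph.Walk.cons h p) = w u v + walkWeight w p := by
  simp [walkWeight]

lemma walkWeight_reverse {V : Type*} {G : SimpleGraph V} {w : V → V → ℝ}
    (hw : ∀ a b, w a b = w b a) {u v : V} (p : G.Walk u v) :
    walkWeight w p.reverse = walkWeight w p := by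
  unfold walkWeight
  rw [SimpleGraph.Walk.darts_reverse, List.map_reverse, List.sum_reverse, List.map_map]
  have : ((fun d : G.Dart => w d.fst d.snd) ∘ SimpleGraph.Dart.symm)
      = fun d : G.Dart => w d.fst d.snd := by
    funext d
    simp [SimpleGraph.Dart.symm, hw d.snd d.fst]
  rw [this]

lemma exists_decomp {V : Type*} [DecidableEq V] {G : SimpleGraph V} {i j : V} :
    ∀ {s t : V} (p : G.Walk s t),
    (∃ d ∈ p.darts, d.fst = i ∧ d.snd = j) →
    ∃ (h : G.Adj i j) (q : G.Walk s i) (r : G.Walk j t),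
      p = q.append (SimpleGraph.Walk.cons h r) := by
  intro s t p
  induction p with
  | nil => simp
  | @cons u v t h p ih =>
    rintro ⟨d, hd, hfst, hsnd⟩
    rw [SimpleGraph.Walk.darts_cons, List.mem_cons] at hd
    rcases hd with rfl | hd
    · simp only at hfst hsnd
      subst hfst; subst hsnd
      exact ⟨h, SimpleGraph.Walk.nil, p, rfl⟩
    · obtain ⟨ha, q, r, rfl⟩ := ih ⟨d, hd, hfst, hsnd⟩
      exact ⟨ha, SimpleGraph.Walk.cons h q, r, by simp⟩

lemma exists_decomp2 {V : Type*} [DecidableEq V] {G : SimpleGraph V} {i j : V} :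
    ∀ {s t : V} (p : G.Walk s t),
    2 ≤ p.darts.countP (fun d => decide (d.fst = i ∧ d.snd = j)) →
    ∃ (h : G.Adj i j) (q : G.Walk s i) (r : G.Walk j i) (r' : G.Walk j t),
      p = q.append (SimpleGraph.Walk.cons h (r.append (SimpleGraph.Walk.cons h r'))) := by
  intro s t p
  induction p with
  | nil => simp
  | @cons u v t h p ih =>
    intro hc
    rw [SimpleGraph.Walk.darts_cons, List.countP_cons] at hc
    by_cases hd : u = i ∧ v = j
    · obtain ⟨rfl, rfl⟩ := hd
      rw [if_pos (by simp)] at hc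
      have h1 : 0 < p.darts.countP (fun d => decide (d.fst = u ∧ d.snd = v)) := by omega
      obtain ⟨d, hdm, hP⟩ := List.countP_pos_iff.mp h1
      rw [decide_eq_true_eq] at hP
      obtain ⟨ha, q, r, rfl⟩ := exists_decomp p ⟨d, hdm, hP⟩
      refine ⟨h, SimpleGraph.Walk.nil, q, r, ?_⟩
      simp
    · rw [if_neg (by simp [hd])] at hc
      obtain ⟨ha, q, r, r', rfl⟩ := ih (by omega)
      exact ⟨ha, SimpleGraph.Walk.cons h q, r, r', by simp⟩

theorem stmt4 {V C : Type*} [DecidableEq V] {G : SimpleGraph V}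
    (w : V → V → ℝ) (hw : ∀ a b, w a b = w b a)
    (hpos : ∀ a b, G.Adj a b → 0 < w a b)
    (κ : V → C) {s t : V} (p : G.Walk s t)
    (hcov : ∀ c ∈ Set.range κ, ∃ v ∈ p.support, κ v = c)
    (hmin : ∀ (t' : V) (q : G.Walk s t'),
      (∀ c ∈ Set.range κ, ∃ v ∈ q.support, κ v = c) →
      walkWeight w p ≤ walkWeight w q)
    (i j : V) :
    p.darts.countP (fun d => decide (d.fst = i ∧ d.snd = j)) ≤ 1 := by
  by_contra hcnt
  push_neg at hcnt
  obtain ⟨ha, q, r, r', hp⟩ := exists_decomp2 p hcnt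
  set pnew : G.Walk s t := q.append (r.reverse.append r') with hpnew
  have hcov' : ∀ c ∈ Set.range κ, ∃ v ∈ pnew.support, κ v = c := by
    intro c hc
    obtain ⟨v, hv, hvc⟩ := hcov c hc
    refine ⟨v, ?_, hvc⟩
    rw [hp] at hv
    rw [SimpleGraph.Walk.mem_support_append_iff] at hv ⊢
    rw [SimpleGraph.Walk.mem_support_append_iff, SimpleGraph.Walk.support_reverse,
      List.mem_reverse]
    rcases hv with hv | hv
    · exact Or.inl hv
    · rw [SimpleGraph.Walk.support_cons, List.mem_cons] at hv
      rcases hv with rfl | hv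
      · exact Or.inl q.end_mem_support
      · rw [SimpleGraph.Walk.mem_support_append_iff] at hv
        rcases hv with hv | hv
        · exact Or.inr (Or.inl hv)
        · rw [SimpleGraph.Walk.support_cons, List.mem_cons] at hv
          rcases hv with rfl | hv
          · exact Or.inr (Or.inl r.end_mem_support)
          · exact Or.inr (Or.inr hv)
  have hle := hmin t pnew hcov'
  have e1 : walkWeight w p
      = walkWeight w q + (w i j + (walkWeight w r + (w i j + walkWeight w r'))) := by
    rw [hp, walkWeight_append, walkWeight_cons, walkWeight_append, walkWeight_cons]
  have e2 : walkWeight w pnew = walkWeight w q + (walkWeight w r + walkWeight w r') := by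
    rw [hpnew, walkWeight_append, walkWeight_append, walkWeight_reverse hw]
  have hwij := hpos i j ha
  rw [e1, e2] at hle
  linarith
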